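/- The operators a_0, a_j^+, a_j^− on W satisfy the following q²-commutation relations: for all 1 ≤ l < j ≤ L, a_j^+ a_l^+ = q² a_l^+ a_j^+, a_l^− a_j^− = q² a_j^− a_l^−, a_l^+ a_j^− = q² a_j^− a_l^+, a_j^+ a_l^− = q² a_l^− a_j^+; and for all 1 ≤ j ≤ L, a_j^+ a_0 = q² a_0 a_j^+ and a_0 a_j^− = q² a_j^− a_0. -/
import Mathlib


open Matrix BigOperators Finset

noncomputable section

namespace Stmt5

/-- Index of the tensor basis of `W = V^{⊗(L+1)}`, where `V = ℝ³` has ordered basis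
`(u₋₁, u₀, u₁)` encoded as `Fin 3` (`0 ↦ u₋₁`, `1 ↦ u₀`, `2 ↦ u₁`); tensor factors
are indexed by the sites `0,1,…,L`. -/
abbrev Conf (L : ℕ) := Fin (L + 1) → Fin 3

/-- The matrix `E`: `E u₀ = u₋₁`, `E u₋₁ = E u₁ = 0`. -/
def Emat : Matrix (Fin 3) (Fin 3) ℝ := fun a b => if a = 0 ∧ b = 1 then 1 else 0

/-- The matrix `F`: `F u₀ = u₁`, `F u₋₁ = F u₁ = 0`. -/
def Fmat : Matrix (Fin 3) (Fin 3) ℝ := fun a b => if a = 2 ∧ b = 1 then 1 else 0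

/-- `K = diag(q, q⁻¹, 1)` (entries in the order `u₋₁, u₀, u₁`). -/
def Kmat (q : ℝ) : Matrix (Fin 3) (Fin 3) ℝ := Matrix.diagonal ![q, q⁻¹, 1]

/-- `k = diag(q⁻¹, q², q⁻¹)` (entries in the order `u₋₁, u₀, u₁`). -/
def kmat (q : ℝ) : Matrix (Fin 3) (Fin 3) ℝ := Matrix.diagonal ![q⁻¹, q ^ 2, q⁻¹]

/-- `f = E + Q·F`. -/
def fmat (Q : ℝ) : Matrix (Fin 3) (Fin 3) ℝ := Emat + Q • Fmat

/-- `a₀ = f ⊗ (K⁻¹)^{⊗L}` as a matrix in the tensor basis of `W`. -/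
def a0 (L : ℕ) (q Q : ℝ) : Matrix (Conf L) (Conf L) ℝ :=
  fun b b' => ∏ s : Fin (L + 1),
    (if s = 0 then fmat Q (b s) (b' s) else (Kmat q)⁻¹ (b s) (b' s))

/-- `a_j⁺ = Id^{⊗j} ⊗ E ⊗ (K⁻¹)^{⊗(L−j)}` (the `E` factor at site `j`). -/
def aP (L : ℕ) (q : ℝ) (j : ℕ) : Matrix (Conf L) (Conf L) ℝ :=
  fun b b' => ∏ s : Fin (L + 1),
    (if (s : ℕ) < j then (if b s = b' s then (1 : ℝ) else 0)
     else if (s : ℕ) = j then Emat (b s) (b' s)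
     else (Kmat q)⁻¹ (b s) (b' s))

/-- `a_j⁻ = Q · k^{⊗j} ⊗ F ⊗ (K⁻¹)^{⊗(L−j)}` (the `F` factor at site `j`). -/
def aM (L : ℕ) (q Q : ℝ) (j : ℕ) : Matrix (Conf L) (Conf L) ℝ :=
  fun b b' => Q * ∏ s : Fin (L + 1),
    (if (s : ℕ) < j then kmat q (b s) (b' s)
     else if (s : ℕ) = j then Fmat (b s) (b' s)
     else (Kmat q)⁻¹ (b s) (b' s))

/-- The tensor-product operator determined by a family of one-site matrices. -/
def T (L : ℕ) (M : Fin (L + 1) → Matrix (Fin 3) (Fin 3) ℝ) : Matrix (Conf L) (Conf L) ℝ :=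
  fun b b' => ∏ s, M s (b s) (b' s)

lemma T_mul (L : ℕ) (M N : Fin (L + 1) → Matrix (Fin 3) (Fin 3) ℝ) :
    T L M * T L N = T L (fun s => M s * N s) := by
  funext b b'
  simp only [T, Matrix.mul_apply]
  rw [Finset.prod_univ_sum, Fintype.piFinset_univ]
  exact Finset.sum_congr rfl fun c _ => (Finset.prod_mul_distrib).symm

lemma T_smul (L : ℕ) (c : Fin (L + 1) → ℝ) (X : Fin (L + 1) → Matrix (Fin 3) (Fin 3) ℝ) :
    T L (fun s => c s • X s) = (∏ s, c s) • T L X := by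
  funext b b'
  simp only [T, Matrix.smul_apply, smul_eq_mul, Finset.prod_mul_distrib]

lemma T_comm (L : ℕ) (M N : Fin (L + 1) → Matrix (Fin 3) (Fin 3) ℝ) (c : Fin (L + 1) → ℝ)
    (h : ∀ s, M s * N s = c s • (N s * M s)) :
    T L M * T L N = (∏ s, c s) • (T L N * T L M) := by
  rw [T_mul, T_mul, ← T_smul]
  exact congrArg (T L) (funext h)

/-- The inverse of `K`. -/
def D (q : ℝ) : Matrix (Fin 3) (Fin 3) ℝ := Matrix.diagonal ![q⁻¹, q, 1]

lemma Kmat_inv (q : ℝ) (hq : q ≠ 0) : (Kmat q)⁻¹ = D q := by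
  apply Matrix.inv_eq_right_inv
  rw [Kmat, D, Matrix.diagonal_mul_diagonal]
  have h : (fun i => ![q, q⁻¹, 1] i * ![q⁻¹, q, 1] i) = fun _ => (1 : ℝ) := by
    funext i; fin_cases i <;> simp [mul_inv_cancel₀ hq, inv_mul_cancel₀ hq]
  rw [h]
  exact Matrix.diagonal_one

lemma E_D (q : ℝ) (hq : q ≠ 0) : Emat * D q = q ^ 2 • (D q * Emat) := by
  ext a b
  fin_cases a <;> fin_cases b <;>
    simp [Emat, D, Matrix.mul_apply, Fin.sum_univ_three, Matrix.diagonal_apply,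
      Matrix.smul_apply, smul_eq_mul] <;> field_simp <;> ring

lemma D_F (q : ℝ) (hq : q ≠ 0) : D q * Fmat = q⁻¹ • (Fmat * D q) := by
  ext a b
  fin_cases a <;> fin_cases b <;>
    simp [Fmat, D, Matrix.mul_apply, Fin.sum_univ_three, Matrix.diagonal_apply,
      Matrix.smul_apply, smul_eq_mul] <;> field_simp <;> ring

lemma E_k (q : ℝ) (hq : q ≠ 0) : Emat * kmat q = q ^ 3 • (kmat q * Emat) := by
  ext a b
  fin_cases a <;> fin_cases b <;>
    simp [Emat, kmat, Matrix.mul_apply, Fin.sum_univ_three, Matrix.diagonal_apply,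
      Matrix.smul_apply, smul_eq_mul] <;> field_simp <;> ring

lemma F_k (q : ℝ) (hq : q ≠ 0) : Fmat * kmat q = q ^ 3 • (kmat q * Fmat) := by
  ext a b
  fin_cases a <;> fin_cases b <;>
    simp [Fmat, kmat, Matrix.mul_apply, Fin.sum_univ_three, Matrix.diagonal_apply,
      Matrix.smul_apply, smul_eq_mul] <;> field_simp <;> ring

lemma f_k (q Q : ℝ) (hq : q ≠ 0) : fmat Q * kmat q = q ^ 3 • (kmat q * fmat Q) := by
  rw [fmat, add_mul, mul_add, Matrix.smul_mul, Matrix.mul_smul, E_k q hq, F_k q hq,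
    smul_add, smul_comm Q (q ^ 3)]

lemma D_k (q : ℝ) : D q * kmat q = kmat q * D q := by
  rw [D, kmat, Matrix.diagonal_mul_diagonal, Matrix.diagonal_mul_diagonal]
  have h : (fun i => ![q⁻¹, q, 1] i * ![q⁻¹, q ^ 2, q⁻¹] i)
      = fun i => ![q⁻¹, q ^ 2, q⁻¹] i * ![q⁻¹, q, 1] i := by funext i; ring
  rw [h]

lemma prod_site (L j : ℕ) (hj : j ≤ L) (x : ℝ) :
    ∏ s : Fin (L + 1), (if (s : ℕ) = j then x else 1) = x := by
  rw [Finset.prod_eq_single (⟨j, by omega⟩ : Fin (L + 1))]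
  · simp
  · intro b _ hb
    have hbj : (b : ℕ) ≠ j := fun h => hb (Fin.ext h)
    simp [hbj]
  · intro h; exact absurd (Finset.mem_univ _) h

lemma prod_site2 (L l j : ℕ) (hlj : l ≠ j) (hl : l ≤ L) (hj : j ≤ L) (x y : ℝ) :
    ∏ s : Fin (L + 1), (if (s : ℕ) = l then x else if (s : ℕ) = j then y else 1) = x * y := by
  have h : ∀ s : Fin (L + 1), (if (s : ℕ) = l then x else if (s : ℕ) = j then y else 1)
      = (if (s : ℕ) = l then x else 1) * (if (s : ℕ) = j then y else 1) := by
    intro s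
    by_cases h1 : (s : ℕ) = l
    · have h2 : (s : ℕ) ≠ j := by omega
      simp [h1, h2, hlj]
    · simp [h1]
  rw [Finset.prod_congr rfl fun s _ => h s, Finset.prod_mul_distrib,
    prod_site L l hl, prod_site L j hj]

/-- The one-site family whose tensor product is `a_j⁺`. -/
def Pfam (q : ℝ) (j : ℕ) (L : ℕ) : Fin (L + 1) → Matrix (Fin 3) (Fin 3) ℝ :=
  fun s => if (s : ℕ) < j then 1 else if (s : ℕ) = j then Emat else D q

/-- The one-site family whose tensor product is `a_j⁻` (without the `Q` prefactor). -/
def Mfam (q : ℝ) (j : ℕ) (L : ℕ) : Fin (L + 1) → Matrix (Fin 3) (Fin 3) ℝ :=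
  fun s => if (s : ℕ) < j then kmat q else if (s : ℕ) = j then Fmat else D q

/-- The one-site family whose tensor product is `a₀`. -/
def Zfam (q Q : ℝ) (L : ℕ) : Fin (L + 1) → Matrix (Fin 3) (Fin 3) ℝ :=
  fun s => if s = 0 then fmat Q else D q

lemma aP_eq (L : ℕ) (q : ℝ) (hq : q ≠ 0) (j : ℕ) : aP L q j = T L (Pfam q j L) := by
  funext b b'
  simp only [aP, T, Pfam]
  refine Finset.prod_congr rfl fun s _ => ?_
  rw [Kmat_inv q hq]
  by_cases h1 : (s : ℕ) < j
  · simp [h1, Matrix.one_apply]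
  · by_cases h2 : (s : ℕ) = j <;> simp [h1, h2]

lemma aM_eq (L : ℕ) (q Q : ℝ) (hq : q ≠ 0) (j : ℕ) :
    aM L q Q j = Q • T L (Mfam q j L) := by
  funext b b'
  simp only [aM, T, Mfam, Matrix.smul_apply, smul_eq_mul]
  congr 1
  refine Finset.prod_congr rfl fun s _ => ?_
  rw [Kmat_inv q hq]
  by_cases h1 : (s : ℕ) < j
  · simp [h1]
  · by_cases h2 : (s : ℕ) = j <;> simp [h1, h2]

lemma a0_eq (L : ℕ) (q Q : ℝ) (hq : q ≠ 0) : a0 L q Q = T L (Zfam q Q L) := by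
  funext b b'
  simp only [a0, T, Zfam]
  refine Finset.prod_congr rfl fun s _ => ?_
  rw [Kmat_inv q hq]
  by_cases h1 : s = 0 <;> simp [h1]

lemma smul_conj {L : ℕ} (a b c : ℝ) (A B : Matrix (Conf L) (Conf L) ℝ)
    (h : A * B = c • (B * A)) :
    (a • A) * (b • B) = c • ((b • B) * (a • A)) := by
  rw [Matrix.smul_mul, Matrix.mul_smul, h, Matrix.smul_mul, Matrix.mul_smul,
    smul_smul, smul_smul, smul_smul, smul_smul]
  congr 1
  ring

lemma smul_conj_l {L : ℕ} (a c : ℝ) (A B : Matrix (Conf L) (Conf L) ℝ)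
    (h : A * B = c • (B * A)) :
    (a • A) * B = c • (B * (a • A)) := by
  rw [Matrix.smul_mul, h, Matrix.mul_smul, smul_smul, smul_smul]
  congr 1
  ring

lemma smul_conj_r {L : ℕ} (b c : ℝ) (A B : Matrix (Conf L) (Conf L) ℝ)
    (h : A * B = c • (B * A)) :
    A * (b • B) = c • ((b • B) * A) := by
  rw [Matrix.mul_smul, h, Matrix.smul_mul, smul_smul, smul_smul]
  congr 1
  ring

lemma core_PP (L l j : ℕ) (q : ℝ) (hq : q ≠ 0) (hlj : l < j) (hj : j ≤ L) :
    T L (Pfam q j L) * T L (Pfam q l L)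
      = q ^ 2 • (T L (Pfam q l L) * T L (Pfam q j L)) := by
  rw [T_comm L _ _ (fun s => if (s : ℕ) = j then q ^ 2 else 1) ?_, prod_site L j hj]
  intro s
  have e1 : l < j := hlj
  have e2 : ¬ j < l := by omega
  have e3 : j ≠ l := by omega
  have e4 : l ≠ j := by omega
  simp only [Pfam]
  rcases lt_trichotomy (s : ℕ) j with h | h | h
  · have h2 : (s : ℕ) ≠ j := by omega
    by_cases h3 : (s : ℕ) < l
    · simp [e1, e2, e3, e4, h, h2, h3]
    · by_cases h4 : (s : ℕ) = l
      · simp [e1, e2, e3, e4, h, h2, h3, h4]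
      · simp [e1, e2, e3, e4, h, h2, h3, h4]
  · have h3 : ¬ (s : ℕ) < l := by omega
    have h4 : (s : ℕ) ≠ l := by omega
    have h5 : ¬ (s : ℕ) < j := by omega
    simp [e1, e2, e3, e4, h, h3, h4, h5, E_D q hq]
  · have h2 : (s : ℕ) ≠ j := by omega
    have h3 : ¬ (s : ℕ) < l := by omega
    have h4 : (s : ℕ) ≠ l := by omega
    have h5 : ¬ (s : ℕ) < j := by omega
    simp [e1, e2, e3, e4, h2, h3, h4, h5]

lemma q3_inv (q : ℝ) (hq : q ≠ 0) : q ^ 3 * q⁻¹ = q ^ 2 := by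
  rw [pow_succ, mul_assoc, mul_inv_cancel₀ hq, mul_one]

lemma core_MM (L l j : ℕ) (q : ℝ) (hq : q ≠ 0) (hlj : l < j) (hj : j ≤ L) :
    T L (Mfam q l L) * T L (Mfam q j L)
      = q ^ 2 • (T L (Mfam q j L) * T L (Mfam q l L)) := by
  rw [T_comm L _ _ (fun s => if (s : ℕ) = l then q ^ 3 else if (s : ℕ) = j then q⁻¹ else 1) ?_,
    prod_site2 L l j (by omega) (by omega) hj, q3_inv q hq]
  intro s
  have e1 : l < j := hlj
  have e2 : ¬ j < l := by omega
  have e3 : j ≠ l := by omega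
  have e4 : l ≠ j := by omega
  simp only [Mfam]
  rcases lt_trichotomy (s : ℕ) l with h | h | h
  · have h1 : (s : ℕ) < j := by omega
    have h2 : (s : ℕ) ≠ l := by omega
    have h3 : (s : ℕ) ≠ j := by omega
    simp [e1, e2, e3, e4, h, h1, h2, h3]
  · have h1 : (s : ℕ) < j := by omega
    have h3 : ¬ (s : ℕ) < l := by omega
    simp [e1, e2, e3, e4, h, h1, h3, F_k q hq]
  · have h2 : (s : ℕ) ≠ l := by omega
    have h3 : ¬ (s : ℕ) < l := by omega
    rcases lt_trichotomy (s : ℕ) j with h4 | h4 | h4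
    · have h5 : (s : ℕ) ≠ j := by omega
      simp [e1, e2, e3, e4, h2, h3, h4, h5, D_k q]
    · have h5 : ¬ (s : ℕ) < j := by omega
      simp [e1, e2, e3, e4, h2, h3, h4, h5, D_F q hq]
    · have h5 : ¬ (s : ℕ) < j := by omega
      have h6 : (s : ℕ) ≠ j := by omega
      simp [e1, e2, e3, e4, h2, h3, h5, h6]

lemma core_PM (L l j : ℕ) (q : ℝ) (hq : q ≠ 0) (hlj : l < j) (hj : j ≤ L) :
    T L (Pfam q l L) * T L (Mfam q j L)
      = q ^ 2 • (T L (Mfam q j L) * T L (Pfam q l L)) := by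
  rw [T_comm L _ _ (fun s => if (s : ℕ) = l then q ^ 3 else if (s : ℕ) = j then q⁻¹ else 1) ?_,
    prod_site2 L l j (by omega) (by omega) hj, q3_inv q hq]
  intro s
  have e1 : l < j := hlj
  have e2 : ¬ j < l := by omega
  have e3 : j ≠ l := by omega
  have e4 : l ≠ j := by omega
  simp only [Pfam, Mfam]
  rcases lt_trichotomy (s : ℕ) l with h | h | h
  · have h1 : (s : ℕ) < j := by omega
    have h2 : (s : ℕ) ≠ l := by omega
    have h3 : (s : ℕ) ≠ j := by omega
    simp [e1, e2, e3, e4, h, h1, h2, h3]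
  · have h1 : (s : ℕ) < j := by omega
    have h3 : ¬ (s : ℕ) < l := by omega
    have hek : Emat * kmat q = q ^ 3 • (kmat q * Emat) := E_k q hq
    simp [e1, e2, e3, e4, h, h1, h3, hek]
  · have h2 : (s : ℕ) ≠ l := by omega
    have h3 : ¬ (s : ℕ) < l := by omega
    rcases lt_trichotomy (s : ℕ) j with h4 | h4 | h4
    · have h5 : (s : ℕ) ≠ j := by omega
      simp [e1, e2, e3, e4, h2, h3, h4, h5, D_k q]
    · have h5 : ¬ (s : ℕ) < j := by omega
      simp [e1, e2, e3, e4, h2, h3, h4, h5, D_F q hq]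
    · have h5 : ¬ (s : ℕ) < j := by omega
      have h6 : (s : ℕ) ≠ j := by omega
      simp [e1, e2, e3, e4, h2, h3, h5, h6]

lemma core_PM' (L l j : ℕ) (q : ℝ) (hq : q ≠ 0) (hlj : l < j) (hj : j ≤ L) :
    T L (Pfam q j L) * T L (Mfam q l L)
      = q ^ 2 • (T L (Mfam q l L) * T L (Pfam q j L)) := by
  rw [T_comm L _ _ (fun s => if (s : ℕ) = j then q ^ 2 else 1) ?_, prod_site L j hj]
  intro s
  have e1 : l < j := hlj
  have e2 : ¬ j < l := by omega
  have e3 : j ≠ l := by omega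
  have e4 : l ≠ j := by omega
  simp only [Pfam, Mfam]
  rcases lt_trichotomy (s : ℕ) j with h | h | h
  · have h2 : (s : ℕ) ≠ j := by omega
    rcases lt_trichotomy (s : ℕ) l with h3 | h3 | h3
    · simp [e1, e2, e3, e4, h, h2, h3]
    · have h4 : ¬ (s : ℕ) < l := by omega
      simp [e1, e2, e3, e4, h, h2, h3, h4]
    · have h4 : ¬ (s : ℕ) < l := by omega
      have h5 : (s : ℕ) ≠ l := by omega
      simp [e1, e2, e3, e4, h, h2, h4, h5]
  · have h3 : ¬ (s : ℕ) < l := by omega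
    have h4 : (s : ℕ) ≠ l := by omega
    have h5 : ¬ (s : ℕ) < j := by omega
    simp [e1, e2, e3, e4, h, h3, h4, h5, E_D q hq]
  · have h2 : (s : ℕ) ≠ j := by omega
    have h3 : ¬ (s : ℕ) < l := by omega
    have h4 : (s : ℕ) ≠ l := by omega
    have h5 : ¬ (s : ℕ) < j := by omega
    simp [e1, e2, e3, e4, h2, h3, h4, h5]

lemma core_P0 (L j : ℕ) (q Q : ℝ) (hq : q ≠ 0) (hj1 : 1 ≤ j) (hj : j ≤ L) :
    T L (Pfam q j L) * T L (Zfam q Q L)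
      = q ^ 2 • (T L (Zfam q Q L) * T L (Pfam q j L)) := by
  rw [T_comm L _ _ (fun s => if (s : ℕ) = j then q ^ 2 else 1) ?_, prod_site L j hj]
  intro s
  have e1 : 0 < j := hj1
  have e2 : ¬ j < 0 := by omega
  have e3 : j ≠ 0 := by omega
  have e4 : (0 : ℕ) ≠ j := by omega
  simp only [Pfam, Zfam]
  rcases lt_trichotomy (s : ℕ) j with h | h | h
  · have h2 : (s : ℕ) ≠ j := by omega
    by_cases h3 : s = 0
    · simp [e1, e2, e3, e4, h, h2, h3]
    · simp [e1, e2, e3, e4, h, h2, h3]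
  · have h3 : s ≠ 0 := by
      intro he
      rw [he] at h
      simp at h
      omega
    have h5 : ¬ (s : ℕ) < j := by omega
    simp [e1, e2, e3, e4, h, h3, h5, E_D q hq]
  · have h2 : (s : ℕ) ≠ j := by omega
    have h3 : s ≠ 0 := by
      intro he
      rw [he] at h
      simp at h
    have h5 : ¬ (s : ℕ) < j := by omega
    simp [e1, e2, e3, e4, h2, h3, h5]

lemma core_0M (L j : ℕ) (q Q : ℝ) (hq : q ≠ 0) (hj1 : 1 ≤ j) (hj : j ≤ L) :
    T L (Zfam q Q L) * T L (Mfam q j L)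
      = q ^ 2 • (T L (Mfam q j L) * T L (Zfam q Q L)) := by
  rw [T_comm L _ _ (fun s => if (s : ℕ) = 0 then q ^ 3 else if (s : ℕ) = j then q⁻¹ else 1) ?_,
    prod_site2 L 0 j (by omega) (by omega) hj, q3_inv q hq]
  intro s
  have e1 : 0 < j := hj1
  have e2 : ¬ j < 0 := by omega
  have e3 : j ≠ 0 := by omega
  have e4 : (0 : ℕ) ≠ j := by omega
  simp only [Zfam, Mfam]
  by_cases h0 : s = 0
  · have h1 : (s : ℕ) = 0 := by rw [h0]; simp
    have h2 : (s : ℕ) < j := by omega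
    simp [e1, e2, e3, e4, h0, h1, h2, f_k q Q hq]
  · have h1 : (s : ℕ) ≠ 0 := by
      intro he
      exact h0 (Fin.ext (by simpa using he))
    rcases lt_trichotomy (s : ℕ) j with h4 | h4 | h4
    · have h5 : (s : ℕ) ≠ j := by omega
      simp [e1, e2, e3, e4, h0, h1, h4, h5, D_k q]
    · have h5 : ¬ (s : ℕ) < j := by omega
      simp [e1, e2, e3, e4, h0, h1, h4, h5, D_F q hq]
    · have h5 : ¬ (s : ℕ) < j := by omega
      have h6 : (s : ℕ) ≠ j := by omega
      simp [e1, e2, e3, e4, h0, h1, h5, h6]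

/-- **`q²`-commutation relations** (the Lemma in the proof of Theorem 1.3):
for `1 ≤ l < j ≤ L`, `a_j⁺a_l⁺ = q² a_l⁺a_j⁺`, `a_l⁻a_j⁻ = q² a_j⁻a_l⁻`,
`a_l⁺a_j⁻ = q² a_j⁻a_l⁺`, `a_j⁺a_l⁻ = q² a_l⁻a_j⁺`; and for `1 ≤ j ≤ L`,
`a_j⁺a₀ = q² a₀a_j⁺` and `a₀a_j⁻ = q² a_j⁻a₀`. -/
theorem a_operators_qsquared_commutation (L : ℕ) (hL : 1 ≤ L)
    (q Q : ℝ) (hq0 : 0 < q) (hq1 : q < 1) (hQ0 : 0 < Q) (hQ1 : Q < 1) :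
    (∀ l j : ℕ, 1 ≤ l → l < j → j ≤ L →
      aP L q j * aP L q l = q ^ 2 • (aP L q l * aP L q j) ∧
      aM L q Q l * aM L q Q j = q ^ 2 • (aM L q Q j * aM L q Q l) ∧
      aP L q l * aM L q Q j = q ^ 2 • (aM L q Q j * aP L q l) ∧
      aP L q j * aM L q Q l = q ^ 2 • (aM L q Q l * aP L q j)) ∧
    (∀ j : ℕ, 1 ≤ j → j ≤ L →
      aP L q j * a0 L q Q = q ^ 2 • (a0 L q Q * aP L q j) ∧
      a0 L q Q * aM L q Q j = q ^ 2 • (aM L q Q j * a0 L q Q)) := by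
  have hq : q ≠ 0 := ne_of_gt hq0
  constructor
  · intro l j hl hlj hjL
    refine ⟨?_, ?_, ?_, ?_⟩
    · rw [aP_eq L q hq j, aP_eq L q hq l]
      exact core_PP L l j q hq hlj hjL
    · rw [aM_eq L q Q hq l, aM_eq L q Q hq j]
      exact smul_conj Q Q _ _ _ (core_MM L l j q hq hlj hjL)
    · rw [aP_eq L q hq l, aM_eq L q Q hq j]
      exact smul_conj_r Q _ _ _ (core_PM L l j q hq hlj hjL)
    · rw [aP_eq L q hq j, aM_eq L q Q hq l]
      exact smul_conj_r Q _ _ _ (core_PM' L l j q hq hlj hjL)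
  · intro j hj1 hjL
    constructor
    · rw [aP_eq L q hq j, a0_eq L q Q hq]
      exact core_P0 L j q Q hq hj1 hjL
    · rw [a0_eq L q Q hq, aM_eq L q Q hq j]
      exact smul_conj_r Q _ _ _ (core_0M L j q Q hq hj1 hjL)

end Stmt5

end
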